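/- Let n ≥ 2, a ≥ 2√(n-1), and β_0 = 1/a, β_k = (1 + (n-1)β_{k-1}²)/(a - (n-1)β_{k-1}) − β_{k-1}. Then for all k ≥ 1, (β_{k+1} − β_k)(β_k − β_{k-1}) ≤ 0; that is, the sequence alternates between non-increasing and non-decreasing steps. -/

import Mathlib

/-!
Write `m = n - 1` and `β_{k+1} = T β_k` with `T x = (1 + m x²) / (a - m x) - x`. The increments are
`T x - x = g x / (a - m x)` with `g x = 3 m x² - 2 a x + 1`, and `g` transforms under `T` by
`g (T x) · (a - m x)² = g x · (4 m² x² + 3 m - a²)`. On the invariant interval `0 < x ≤ 1/a` the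
denominator `a - m x` is positive and the last factor is nonpositive because
`a⁴ - 3 m a² - 4 m² = (a² - 4 m)(a² + m) ≥ 0`, so consecutive increments have opposite signs.
-/

namespace BetaRecursion

variable {m a x : ℝ}

noncomputable def step (m a x : ℝ) : ℝ := (1 + m * x ^ 2) / (a - m * x) - x

def gap (m a x : ℝ) : ℝ := 3 * m * x ^ 2 - 2 * a * x + 1

theorem step_sub_self (h : a - m * x ≠ 0) : step m a x - x = gap m a x / (a - m * x) := by
  unfold step gap
  field_simp
  ring

theorem gap_step_mul_sq (h : a - m * x ≠ 0) :
    gap m a (step m a x) * (a - m * x) ^ 2 = gap m a x * (4 * m ^ 2 * x ^ 2 + 3 * m - a ^ 2) := by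
  unfold gap step
  field_simp
  ring

section Invariant

variable (hm : 0 < m) (ha : 0 < a) (hma : 4 * m ≤ a ^ 2)
include hm ha hma

theorem sub_mul_pos (hax : a * x ≤ 1) : 0 < a - m * x := by
  nlinarith [mul_le_mul_of_nonneg_left hax hm.le]

theorem step_pos_and_mul_le_one (hx : 0 < x) (hax : a * x ≤ 1) :
    0 < step m a x ∧ a * step m a x ≤ 1 := by
  have hden := sub_mul_pos hm ha hma hax
  unfold step
  constructor
  · have : x < (1 + m * x ^ 2) / (a - m * x) := by
      rw [lt_div_iff₀ hden]
      nlinarith [mul_pos (mul_pos hm hx) hx]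
    linarith
  · have hgap : 0 < a ^ 2 - m - 2 * a * m * x := by
      nlinarith [mul_le_mul_of_nonneg_left hax hm.le]
    have : a * (1 + m * x ^ 2) / (a - m * x) ≤ 1 + a * x := by
      rw [div_le_iff₀ hden]
      nlinarith [mul_pos hx hgap]
    rw [mul_sub, ← mul_div_assoc]
    linarith

theorem gap_factor_nonpos (hx : 0 < x) (hax : a * x ≤ 1) :
    4 * m ^ 2 * x ^ 2 + 3 * m - a ^ 2 ≤ 0 := by
  have hax2 : (a * x) ^ 2 ≤ 1 := by nlinarith [mul_pos ha hx]
  -- multiply by `a² > 0`: `4 m² (a x)² + 3 m a² - a⁴ ≤ 4 m² + 3 m a² - a⁴ = -(a² - 4 m)(a² + m)`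
  have : a ^ 2 * (4 * m ^ 2 * x ^ 2 + 3 * m - a ^ 2) ≤ 0 := by
    nlinarith [mul_le_mul_of_nonneg_left hax2 (sq_nonneg (2 * m)),
      mul_nonneg (sub_nonneg.2 hma) (add_pos (pow_pos ha 2) hm).le]
  exact nonpos_of_mul_nonpos_right this (by positivity)

theorem gap_step_mul_gap_nonpos (hx : 0 < x) (hax : a * x ≤ 1) :
    gap m a (step m a x) * gap m a x ≤ 0 := by
  have hden := sub_mul_pos hm ha hma hax
  have key := gap_step_mul_sq hden.ne'
  have : gap m a (step m a x) * gap m a x * (a - m * x) ^ 2 ≤ 0 := by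
    calc gap m a (step m a x) * gap m a x * (a - m * x) ^ 2
        = gap m a x ^ 2 * (4 * m ^ 2 * x ^ 2 + 3 * m - a ^ 2) := by rw [mul_right_comm, key]; ring
      _ ≤ 0 := mul_nonpos_of_nonneg_of_nonpos (sq_nonneg _) (gap_factor_nonpos hm ha hma hx hax)
  exact nonpos_of_mul_nonpos_left this (by positivity)

theorem step_increments_mul_nonpos (hx : 0 < x) (hax : a * x ≤ 1) :
    (step m a (step m a x) - step m a x) * (step m a x - x) ≤ 0 := by
  obtain ⟨hy, hay⟩ := step_pos_and_mul_le_one hm ha hma hx hax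
  have hdx := sub_mul_pos hm ha hma hax
  have hdy := sub_mul_pos hm ha hma hay
  rw [step_sub_self hdy.ne', step_sub_self hdx.ne', div_mul_div_comm]
  exact div_nonpos_of_nonpos_of_nonneg (gap_step_mul_gap_nonpos hm ha hma hx hax)
    (mul_pos hdy hdx).le

end Invariant

end BetaRecursion

open BetaRecursion in
theorem stmt_5 (n : ℕ) (hn : 2 ≤ n) (a : ℝ)
    (ha : 2 * Real.sqrt ((n : ℝ) - 1) ≤ a)
    (β : ℕ → ℝ) (h0 : β 0 = 1 / a)
    (hrec : ∀ k : ℕ, β (k + 1) =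
      (1 + ((n : ℝ) - 1) * (β k) ^ 2) / (a - ((n : ℝ) - 1) * β k) - β k) :
    ∀ k : ℕ, (β (k + 2) - β (k + 1)) * (β (k + 1) - β k) ≤ 0 := by
  have hm : (1 : ℝ) ≤ (n : ℝ) - 1 := by
    have : (2 : ℝ) ≤ n := by exact_mod_cast hn
    linarith
  have hsqrt : 1 ≤ Real.sqrt ((n : ℝ) - 1) := Real.one_le_sqrt.2 hm
  have ha0 : 0 < a := by linarith
  have hma : 4 * ((n : ℝ) - 1) ≤ a ^ 2 := by
    calc 4 * ((n : ℝ) - 1) = (2 * Real.sqrt ((n : ℝ) - 1)) ^ 2 := by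
          rw [mul_pow, Real.sq_sqrt (by linarith)]; norm_num
      _ ≤ a ^ 2 := pow_le_pow_left₀ (by positivity) ha 2
  have hstep : ∀ k, β (k + 1) = step ((n : ℝ) - 1) a (β k) := hrec
  have hinv : ∀ k, 0 < β k ∧ a * β k ≤ 1 := by
    intro k
    induction k with
    | zero => rw [h0, mul_one_div_cancel ha0.ne']; exact ⟨by positivity, le_rfl⟩
    | succ k ih =>
      rw [hstep]
      exact step_pos_and_mul_le_one (by linarith) ha0 hma ih.1 ih.2
  intro k
  rw [hstep (k + 1), hstep k]
  exact step_increments_mul_nonpos (by linarith) ha0 hma (hinv k).1 (hinv k).2
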